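/- arXiv:2402.07808 — 3 statements merged into one kernel-verified Lean document; each statement's English description precedes it below -/
import Mathlib

section
/- Consider the Bernoulli (coin flip) simulator with heads probability θ ∈ [0,1], a Beta(1,1) (uniform) prior on θ, and the data distribution assigning probability 0.7 to heads. The single-observation posteriors are Beta(2,1) (with density θ ↦ 2θ on [0,1]) after observing heads and Beta(1,2) (with density θ ↦ 2(1−θ) on [0,1]) after observing tails, and the average posterior G has density g(θ) = 0.3·2(1−θ) + 0.7·2θ on [0,1]. The probability of heads under the pushforward of G through the Bernoulli simulator is ∫₀¹ θ·g(θ) dθ = 17/30, and 17/30 ≠ 7/10; hence the average posterior G is not a valid source distribution for the data distribution. -/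
open MeasureTheory intervalIntegral

/-- Coin-flip example: the average posterior `G` with density
`g(θ) = 0.3·2(1-θ) + 0.7·2θ` on `[0,1]` yields heads probability
`∫₀¹ θ g(θ) dθ = 17/30 ≠ 7/10`, hence it is not a valid source distribution for the
data distribution assigning probability `0.7` to heads. -/
theorem average_posterior_coinflip_not_source :
    (∫ θ in (0 : ℝ)..1, θ * (0.3 * (2 * (1 - θ)) + 0.7 * (2 * θ))) = 17 / 30
      ∧ (17 / 30 : ℝ) ≠ 7 / 10
      ∧ (∫ θ in (0 : ℝ)..1, θ * (0.3 * (2 * (1 - θ)) + 0.7 * (2 * θ))) ≠ 7 / 10 := by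
  have h : (∫ θ in (0 : ℝ)..1, θ * (0.3 * (2 * (1 - θ)) + 0.7 * (2 * θ))) = 17 / 30 := by
    have : ∀ θ : ℝ, θ * (0.3 * (2 * (1 - θ)) + 0.7 * (2 * θ)) = 0.8 * θ^2 + 0.6 * θ := by
      intro θ; ring
    simp_rw [this]
    rw [intervalIntegral.integral_add ((intervalIntegrable_pow 2).const_mul _)
      (intervalIntegrable_id.const_mul _), intervalIntegral.integral_const_mul,
      intervalIntegral.integral_const_mul, integral_pow, integral_id]
    norm_num
  exact ⟨h, by norm_num, by rw [h]; norm_num⟩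
end

section
/- Let σ > 0 and σ_D > 0 be real numbers with σ_D² ≠ σ² + 1, and set s = σ²/(σ² + 1). Let G = gaussianReal 0 (s + s²·σ_D²) be the limit of the average posterior distribution for the Gaussian simulator p(x|θ) = N(θ, 1), Gaussian prior N(0, σ²), and data distribution N(0, σ_D²). Then the pushforward of G through the simulator differs from the data distribution: G.bind (fun θ => gaussianReal θ 1) ≠ gaussianReal 0 σ_D²; i.e., the average posterior is not a valid source distribution. -/
open MeasureTheory ProbabilityTheory
open scoped NNReal

/-!
Pushing `N(0, v)` through the simulator `θ ↦ N(θ, 1)` adds independent unit Gaussian noise, so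
it gives `N(0, v + 1)`. For `v = s + s²σ_D²` with `s = σ²/(σ² + 1)`, the equation
`v + 1 = σ_D²` clears to `(σ_D² - (σ² + 1))(2σ² + 1) = 0`, i.e. `σ_D² = σ² + 1`.
-/

namespace ProbabilityTheory

lemma measurable_gaussianReal_mean (v : ℝ≥0) : Measurable fun m : ℝ ↦ gaussianReal m v :=
  measurable_gaussianReal.comp (measurable_id.prodMk measurable_const)

lemma bind_gaussianReal_eq_conv (μ : Measure ℝ) (v : ℝ≥0) :
    μ.bind (fun θ ↦ gaussianReal θ v) = μ ∗ gaussianReal 0 v := by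
  refine Measure.ext_of_lintegral _ fun f hf ↦ ?_
  rw [Measure.lintegral_bind (measurable_gaussianReal_mean v).aemeasurable hf.aemeasurable,
    Measure.lintegral_conv hf]
  refine lintegral_congr fun θ ↦ ?_
  rw [← zero_add θ, ← gaussianReal_map_const_add, lintegral_map hf (by fun_prop), zero_add]

lemma gaussianReal_bind_gaussianReal (m : ℝ) (v₁ v₂ : ℝ≥0) :
    (gaussianReal m v₁).bind (fun θ ↦ gaussianReal θ v₂) = gaussianReal m (v₁ + v₂) := by
  rw [bind_gaussianReal_eq_conv, gaussianReal_conv_gaussianReal, add_zero]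

end ProbabilityTheory

lemma NNReal.eq_add_one_of_div_add_sq_mul_add_one_eq {a d : ℝ≥0}
    (h : a / (a + 1) + (a / (a + 1)) ^ 2 * d + 1 = d) : d = a + 1 := by
  rw [← NNReal.coe_inj] at h ⊢
  push_cast at h ⊢
  field_simp at h
  have factored : ((d : ℝ) - (a + 1)) * (2 * a + 1) = 0 := by linear_combination -h
  have h2a : (2 * a + 1 : ℝ) ≠ 0 := by positivity
  simpa [h2a, sub_eq_zero] using factored

theorem average_posterior_gaussian_not_source_general
    (σ σ_D : ℝ≥0)
    (hne : σ_D ^ 2 ≠ σ ^ 2 + 1)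
    (s : ℝ≥0) (hs : s = σ ^ 2 / (σ ^ 2 + 1)) :
    (gaussianReal 0 (s + s ^ 2 * σ_D ^ 2)).bind (fun θ => gaussianReal θ 1)
      ≠ gaussianReal 0 (σ_D ^ 2) := by
  rw [gaussianReal_bind_gaussianReal, Ne, gaussianReal_ext_iff, hs]
  exact fun h ↦ hne (NNReal.eq_add_one_of_div_add_sq_mul_add_one_eq h.2)

/-- The limit of the average posterior, `G = N(0, s + s²σ_D²)` with `s = σ²/(σ²+1)`,
is not a valid source distribution for the Gaussian simulator `p(x|θ) = N(θ,1)` and data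
distribution `N(0, σ_D²)` whenever `σ_D² ≠ σ² + 1`. -/
theorem average_posterior_gaussian_not_source
    (σ σ_D : ℝ≥0) (hσ : 0 < σ) (hσD : 0 < σ_D)
    (hne : σ_D ^ 2 ≠ σ ^ 2 + 1)
    (s : ℝ≥0) (hs : s = σ ^ 2 / (σ ^ 2 + 1)) :
    (gaussianReal 0 (s + s ^ 2 * σ_D ^ 2)).bind (fun θ => gaussianReal θ 1)
      ≠ gaussianReal 0 (σ_D ^ 2) :=
  average_posterior_gaussian_not_source_general σ σ_D hne s hs
end

section
/- Let m ≥ 1 be a real number, n a natural number, and x, y : Fin n → ℝ two monotone nondecreasing finite sequences. Then for every permutation π of Fin n, Σᵢ |x i − y i|^m ≤ Σᵢ |x i − y (π i)|^m; i.e., the identity (sorted-order) matching minimizes the empirical m-th power transport cost between the two samples, so the empirical one-dimensional Wasserstein distance of order m is computed from the order statistics as Wₘ(p, q) = (Σᵢ |x⁽ⁱ⁾ − y⁽ⁱ⁾|^m)^{1/m}. -/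
/-!
For a convex `f`, the cost `C i j = f (x i - y j)` of monotone `x, y` is a Monge matrix:
`C i j + C i' j' ≤ C i j' + C i' j` for `i ≤ i'`, `j ≤ j'`, since the two arguments on the left
lie between those on the right and have the same sum. For a Monge matrix, uncrossing never
hurts: if `i` is the largest point moved by `π`, then `swap i (π i) * π` fixes `i`, agrees with
`π` off `{i, π⁻¹ i}`, and by the Monge inequality for `π⁻¹ i < i`, `π i < i` costs no more;
induction on the size of the support reaches the identity matching.
-/

open Finset Equiv

def IsMonge {ι M : Type*} [Preorder ι] [Add M] [LE M] (C : ι → ι → M) : Prop :=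
  ∀ ⦃i i' j j' : ι⦄, i ≤ i' → j ≤ j' → C i j + C i' j' ≤ C i j' + C i' j

theorem ConvexOn.map_add_map_le_of_add_eq {𝕜 : Type*} [Field 𝕜] [LinearOrder 𝕜]
    [IsStrictOrderedRing 𝕜] {D : Set 𝕜} {f : 𝕜 → 𝕜} (hf : ConvexOn 𝕜 D f) {s p q t : 𝕜}
    (hs : s ∈ D) (ht : t ∈ D) (hsp : s ≤ p) (hpt : p ≤ t) (hpq : p + q = s + t) :
    f p + f q ≤ f s + f t := by
  obtain rfl | hst := (hsp.trans hpt).eq_or_lt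
  · obtain rfl : p = s := le_antisymm hpt hsp
    obtain rfl : q = p := by linarith
    rfl
  have hts : t - s ≠ 0 := sub_ne_zero.mpr hst.ne'
  -- `p` and `q` are the convex combinations of `s` and `t` with swapped weights
  set a := (t - p) / (t - s)
  set b := (p - s) / (t - s)
  have ha : 0 ≤ a := div_nonneg (by linarith) (by linarith)
  have hb : 0 ≤ b := div_nonneg (by linarith) (by linarith)
  have hab : a + b = 1 := by simp only [a, b]; field_simp; ring
  have hp : a • s + b • t = p := by simp only [smul_eq_mul, a, b]; field_simp; ring
  have hq : b • s + a • t = q := by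
    simp only [smul_eq_mul] at hp ⊢; linear_combination (s + t) * hab - hp - hpq
  have h₁ := hf.2 hs ht ha hb hab
  have h₂ := hf.2 hs ht hb ha (by rw [add_comm, hab])
  rw [hp] at h₁
  rw [hq] at h₂
  simp only [smul_eq_mul] at h₁ h₂
  linear_combination h₁ + h₂ + (f s + f t) * hab

theorem convexOn_abs_rpow {m : ℝ} (hm : 1 ≤ m) : ConvexOn ℝ Set.univ fun t : ℝ ↦ |t| ^ m := by
  have himg : (fun t : ℝ ↦ |t|) '' Set.univ = Set.Ici 0 := by
    ext z; simpa using ⟨fun ⟨y, hy⟩ ↦ hy ▸ abs_nonneg y, fun hz ↦ ⟨z, abs_of_nonneg hz⟩⟩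
  have habs : ConvexOn ℝ Set.univ fun t : ℝ ↦ |t| := convexOn_univ_norm
  refine ConvexOn.comp (himg ▸ convexOn_rpow hm) habs ?_
  rw [himg]
  exact fun u hu v _ huv ↦ Real.rpow_le_rpow hu huv (by linarith)

theorem ConvexOn.isMonge_comp_sub {𝕜 ι : Type*} [Field 𝕜] [LinearOrder 𝕜]
    [IsStrictOrderedRing 𝕜] [Preorder ι] {f : 𝕜 → 𝕜} (hf : ConvexOn 𝕜 Set.univ f)
    {x y : ι → 𝕜} (hx : Monotone x) (hy : Monotone y) : IsMonge fun i j ↦ f (x i - y j) := by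
  intro i i' j j' hi hj
  exact hf.map_add_map_le_of_add_eq (Set.mem_univ (x i - y j')) (Set.mem_univ (x i' - y j))
    (q := x i' - y j') (sub_le_sub_left (hy hj) _) (sub_le_sub_right (hx hi) _) (by ring)

namespace IsMonge

variable {ι M : Type*} [LinearOrder ι] [Fintype ι]
  [AddCommMonoid M] [PartialOrder M] [IsOrderedAddMonoid M] {C : ι → ι → M}

theorem sum_swap_mul_le (hC : IsMonge C) {π : Perm ι} {i : ι} (hi : π i ≠ i)
    (hmax : ∀ j, π j ≠ j → j ≤ i) :
    ∑ j, C j ((swap i (π i) * π) j) ≤ ∑ j, C j (π j) := by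
  set k := π⁻¹ i
  have hπk : π k = i := π.apply_symm_apply i
  have hki : k ≠ i := fun h ↦ hi (by rwa [h] at hπk)
  have hk : k ≤ i := hmax k (by rwa [hπk, ne_comm])
  have hπi : π i ≤ i := hmax (π i) (π.injective.ne hi)
  have hrest : ∀ j ∈ ({i, k} : Finset ι)ᶜ, C j ((swap i (π i) * π) j) = C j (π j) := by
    intro j hj
    simp only [mem_compl, mem_insert, mem_singleton, not_or] at hj
    rw [Perm.mul_apply, swap_apply_of_ne_of_ne (hπk ▸ π.injective.ne hj.2) (π.injective.ne hj.1)]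
  rw [← sum_add_sum_compl {i, k}, ← sum_add_sum_compl {i, k} (fun j ↦ C j (π j)),
    sum_congr rfl hrest, sum_pair hki.symm, sum_pair hki.symm]
  gcongr ?_ + _
  simp only [Perm.mul_apply, hπk, swap_apply_left, swap_apply_right]
  exact (add_comm _ _).trans_le ((hC hk hπi).trans_eq (add_comm _ _))

theorem sum_le_sum_comp_perm (hC : IsMonge C) (π : Perm ι) :
    ∑ i, C i i ≤ ∑ i, C i (π i) := by
  induction h : π.support.card using Nat.strong_induction_on generalizing π with
  | _ N ih =>
    obtain rfl | hπ := eq_or_ne π 1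
    · rfl
    have hsupp : π.support.Nonempty :=
      nonempty_iff_ne_empty.mpr (mt Perm.support_eq_empty_iff.mp hπ)
    set i := π.support.max' hsupp
    have hi : π i ≠ i := Perm.mem_support.mp (π.support.max'_mem hsupp)
    calc ∑ j, C j j ≤ ∑ j, C j ((swap i (π i) * π) j) :=
          ih _ (h ▸ Perm.card_support_swap_mul hi) _ rfl
      _ ≤ ∑ j, C j (π j) :=
          hC.sum_swap_mul_le hi fun j hj ↦ π.support.le_max' j (Perm.mem_support.mpr hj)

end IsMonge

/-- The sorted-order (identity) matching minimizes the empirical `m`-th power transport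
cost between two monotone samples: for monotone `x, y : Fin n → ℝ` and any permutation
`π`, `Σᵢ |xᵢ - yᵢ|^m ≤ Σᵢ |xᵢ - y_{π(i)}|^m`. -/
theorem sorted_matching_minimizes_transport_cost
    (m : ℝ) (hm : 1 ≤ m) (n : ℕ) (x y : Fin n → ℝ)
    (hx : Monotone x) (hy : Monotone y) (π : Equiv.Perm (Fin n)) :
    ∑ i, |x i - y i| ^ m ≤ ∑ i, |x i - y (π i)| ^ m :=
  ((convexOn_abs_rpow hm).isMonge_comp_sub hx hy).sum_le_sum_comp_perm π
end
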